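/- arXiv:1704.02894 — 6 statements merged into one kernel-verified Lean document; each statement's English description precedes it below -/
import Mathlib

section
/- For every fixed λ ∈ ℝ, the function π ↦ V(π,λ) is nonincreasing and convex on [0,1]; moreover π ↦ V0(π,λ) is nonincreasing and convex on [0,1], and π ↦ V1(π,λ) is affine (linear) in π with slope ρ0 − ρ1. -/
/-!
For a bounded fixed point `W` of the Bellman operator, the monotonicity defect `W b - W a`
(`a ≤ b`) and the convexity defect `W (a x + b y) - (a W x + b W y)` are bounded, and each is
at most `max (β d) 0` where `d` is a defect of the same kind at the updated beliefs: the "play"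
branch is affine with slope `ρ0 - ρ1 ≤ 0`, and the "not play" branch is `β W` composed with the
affine belief update. Iterating, every defect is at most `β ^ n K → 0`.
-/

open Set Filter Topology

noncomputable def beliefUpdate (p π : ℝ) : ℝ := π + p * (1 - π)

noncomputable def bellman (p β ρ0 ρ1 lam : ℝ) (f : ℝ → ℝ) (π : ℝ) : ℝ :=
  max (lam + β * f (beliefUpdate p π)) (π * ρ0 + (1 - π) * ρ1 + β * f 0)

section BeliefUpdate

variable {p : ℝ}

lemma beliefUpdate_mem_Icc (hp0 : 0 ≤ p) (hp1 : p ≤ 1) {π : ℝ} (hπ : π ∈ Icc (0 : ℝ) 1) :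
    beliefUpdate p π ∈ Icc (0 : ℝ) 1 := by
  obtain ⟨h0, h1⟩ := hπ
  unfold beliefUpdate
  constructor <;> nlinarith

lemma monotone_beliefUpdate (hp1 : p ≤ 1) : Monotone (beliefUpdate p) := fun a b hab => by
  unfold beliefUpdate
  nlinarith

lemma beliefUpdate_combo {a b : ℝ} (hab : a + b = 1) (x y : ℝ) :
    beliefUpdate p (a * x + b * y) = a * beliefUpdate p x + b * beliefUpdate p y := by
  unfold beliefUpdate
  linear_combination (-p) * hab

variable {f : ℝ → ℝ} {β : ℝ}

lemma AntitoneOn.const_add_mul_comp_beliefUpdate (hf : AntitoneOn f (Icc 0 1))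
    (hp0 : 0 ≤ p) (hp1 : p ≤ 1) (hβ : 0 ≤ β) (lam : ℝ) :
    AntitoneOn (fun π => lam + β * f (beliefUpdate p π)) (Icc 0 1) := by
  intro a ha b hb hab
  have := hf (beliefUpdate_mem_Icc hp0 hp1 ha) (beliefUpdate_mem_Icc hp0 hp1 hb)
    (monotone_beliefUpdate hp1 hab)
  dsimp only
  gcongr

lemma ConvexOn.const_add_mul_comp_beliefUpdate (hf : ConvexOn ℝ (Icc 0 1) f)
    (hp0 : 0 ≤ p) (hp1 : p ≤ 1) (hβ : 0 ≤ β) (lam : ℝ) :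
    ConvexOn ℝ (Icc 0 1) (fun π => lam + β * f (beliefUpdate p π)) := by
  have hcomp : ConvexOn ℝ (Icc 0 1) (fun π => f (beliefUpdate p π)) := by
    refine ⟨convex_Icc 0 1, fun x hx y hy a b ha hb hab => ?_⟩
    simpa only [smul_eq_mul, beliefUpdate_combo hab] using
      hf.2 (beliefUpdate_mem_Icc hp0 hp1 hx) (beliefUpdate_mem_Icc hp0 hp1 hy) ha hb hab
  exact (convexOn_const lam (convex_Icc 0 1)).add (hcomp.smul hβ)

end BeliefUpdate

theorem nonpos_of_le_max_mul {ι : Type*} {S : Set ι} {δ : ι → ℝ} {β K : ℝ}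
    (hβ0 : 0 ≤ β) (hβ1 : β < 1) (hK : ∀ i ∈ S, δ i ≤ K)
    (hstep : ∀ i ∈ S, ∃ j ∈ S, δ i ≤ max (β * δ j) 0) :
    ∀ i ∈ S, δ i ≤ 0 := by
  have hpow : ∀ n : ℕ, ∀ i ∈ S, δ i ≤ β ^ n * max K 0 := by
    intro n
    induction n with
    | zero => exact fun i hi => by simpa using (hK i hi).trans (le_max_left K 0)
    | succ n ih =>
      intro i hi
      obtain ⟨j, hj, hij⟩ := hstep i hi
      have hpos : 0 ≤ β ^ (n + 1) * max K 0 := by positivity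
      refine hij.trans (max_le ?_ hpos)
      calc β * δ j ≤ β * (β ^ n * max K 0) := mul_le_mul_of_nonneg_left (ih j hj) hβ0
        _ = β ^ (n + 1) * max K 0 := by ring
  have hlim : Tendsto (fun n : ℕ => β ^ n * max K 0) atTop (𝓝 0) := by
    simpa using (tendsto_pow_atTop_nhds_zero_of_lt_one hβ0 hβ1).mul_const (max K 0)
  exact fun i hi => ge_of_tendsto' hlim fun n => hpow n i hi

section FixedPoint

variable {p β ρ0 ρ1 lam C : ℝ} {W : ℝ → ℝ}

theorem antitoneOn_of_eqOn_bellman (hp0 : 0 ≤ p) (hp1 : p ≤ 1) (hρ : ρ0 ≤ ρ1)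
    (hβ0 : 0 ≤ β) (hβ1 : β < 1) (hC : ∀ π ∈ Icc (0 : ℝ) 1, |W π| ≤ C)
    (hW : EqOn W (bellman p β ρ0 ρ1 lam W) (Icc 0 1)) :
    AntitoneOn W (Icc 0 1) := by
  let S : Set (ℝ × ℝ) := {(a, b) : ℝ × ℝ | a ∈ Icc 0 1 ∧ b ∈ Icc 0 1 ∧ a ≤ b}
  let δ : ℝ × ℝ → ℝ := fun (a, b) => W b - W a
  have hK : ∀ q ∈ S, δ q ≤ 2 * C := by
    rintro ⟨a, b⟩ ⟨ha, hb, -⟩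
    have := abs_le.mp (hC a ha)
    have := abs_le.mp (hC b hb)
    dsimp only [δ]
    linarith
  have hstep : ∀ q ∈ S, ∃ r ∈ S, δ q ≤ max (β * δ r) 0 := by
    rintro ⟨a, b⟩ ⟨ha, hb, hab⟩
    refine ⟨(beliefUpdate p a, beliefUpdate p b), ⟨beliefUpdate_mem_Icc hp0 hp1 ha,
      beliefUpdate_mem_Icc hp0 hp1 hb, monotone_beliefUpdate hp1 hab⟩, ?_⟩
    dsimp only [δ]
    rw [hW ha, hW hb, bellman, bellman]
    refine (max_sub_max_le_max _ _ _ _).trans (max_le_max (le_of_eq (by ring)) ?_)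
    nlinarith
  intro a ha b hb hab
  exact sub_nonpos.mp (nonpos_of_le_max_mul hβ0 hβ1 hK hstep (a, b) ⟨ha, hb, hab⟩)

theorem convexOn_of_eqOn_bellman (hp0 : 0 ≤ p) (hp1 : p ≤ 1)
    (hβ0 : 0 ≤ β) (hβ1 : β < 1) (hC : ∀ π ∈ Icc (0 : ℝ) 1, |W π| ≤ C)
    (hW : EqOn W (bellman p β ρ0 ρ1 lam W) (Icc 0 1)) :
    ConvexOn ℝ (Icc 0 1) W := by
  let S : Set (ℝ × ℝ × ℝ × ℝ) :=
    {(x, y, a, b) : ℝ × ℝ × ℝ × ℝ | x ∈ Icc 0 1 ∧ y ∈ Icc 0 1 ∧ 0 ≤ a ∧ 0 ≤ b ∧ a + b = 1}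
  let δ : ℝ × ℝ × ℝ × ℝ → ℝ := fun (x, y, a, b) => W (a * x + b * y) - (a * W x + b * W y)
  have hmem : ∀ {x y a b : ℝ}, x ∈ Icc (0 : ℝ) 1 → y ∈ Icc (0 : ℝ) 1 → 0 ≤ a → 0 ≤ b →
      a + b = 1 → a * x + b * y ∈ Icc (0 : ℝ) 1 := fun hx hy ha hb hab => by
    simpa only [smul_eq_mul] using convex_Icc (0 : ℝ) 1 hx hy ha hb hab
  have hK : ∀ q ∈ S, δ q ≤ 2 * C := by
    rintro ⟨x, y, a, b⟩ ⟨hx, hy, ha, hb, hab⟩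
    have hz := abs_le.mp (hC _ (hmem hx hy ha hb hab))
    have hx' := abs_le.mp (hC x hx)
    have hy' := abs_le.mp (hC y hy)
    dsimp only [δ]
    nlinarith [mul_le_mul_of_nonneg_left hx'.1 ha, mul_le_mul_of_nonneg_left hy'.1 hb]
  have hstep : ∀ q ∈ S, ∃ r ∈ S, δ q ≤ max (β * δ r) 0 := by
    rintro ⟨x, y, a, b⟩ ⟨hx, hy, ha, hb, hab⟩
    refine ⟨(beliefUpdate p x, beliefUpdate p y, a, b), ⟨beliefUpdate_mem_Icc hp0 hp1 hx,
      beliefUpdate_mem_Icc hp0 hp1 hy, ha, hb, hab⟩, ?_⟩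
    have hAx := (le_max_left _ _).trans_eq (hW hx).symm
    have hBx := (le_max_right _ _).trans_eq (hW hx).symm
    have hAy := (le_max_left _ _).trans_eq (hW hy).symm
    have hBy := (le_max_right _ _).trans_eq (hW hy).symm
    dsimp only [δ]
    rw [hW (hmem hx hy ha hb hab), bellman, beliefUpdate_combo hab]
    obtain rfl : b = 1 - a := by linarith
    rw [← max_sub_sub_right]
    refine max_le_max ?_ ?_
    · nlinarith [mul_le_mul_of_nonneg_left hAx ha, mul_le_mul_of_nonneg_left hAy hb]
    · nlinarith [mul_le_mul_of_nonneg_left hBx ha, mul_le_mul_of_nonneg_left hBy hb]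
  refine ⟨convex_Icc 0 1, fun x hx y hy a b ha hb hab => ?_⟩
  have := nonpos_of_le_max_mul hβ0 hβ1 hK hstep (x, y, a, b) ⟨hx, hy, ha, hb, hab⟩
  simp only [smul_eq_mul]
  linarith

end FixedPoint

theorem stmt_2_general (p ρ0 ρ1 β : ℝ)
    (hp0 : 0 < p) (hp1 : p < 1) (hr01 : ρ0 < ρ1)
    (hb0 : 0 < β) (hb1 : β < 1)
    (V : ℝ → ℝ → ℝ)
    (hVbd : ∀ lam : ℝ, ∃ C : ℝ, ∀ π ∈ Set.Icc (0:ℝ) 1, |V π lam| ≤ C)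
    (hVeq : ∀ lam : ℝ, ∀ π ∈ Set.Icc (0:ℝ) 1,
      V π lam = max (lam + β * V (π + p * (1 - π)) lam)
        (π * ρ0 + (1 - π) * ρ1 + β * V 0 lam)) :
    ∀ lam : ℝ,
      AntitoneOn (fun π => V π lam) (Set.Icc (0:ℝ) 1) ∧
      ConvexOn ℝ (Set.Icc (0:ℝ) 1) (fun π => V π lam) ∧
      AntitoneOn (fun π => lam + β * V (π + p * (1 - π)) lam) (Set.Icc (0:ℝ) 1) ∧
      ConvexOn ℝ (Set.Icc (0:ℝ) 1) (fun π => lam + β * V (π + p * (1 - π)) lam) ∧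
      (∃ c : ℝ, ∀ π ∈ Set.Icc (0:ℝ) 1,
        π * ρ0 + (1 - π) * ρ1 + β * V 0 lam = (ρ0 - ρ1) * π + c) := by
  intro lam
  obtain ⟨C, hC⟩ := hVbd lam
  have hfix : EqOn (fun π => V π lam) (bellman p β ρ0 ρ1 lam fun π => V π lam) (Icc 0 1) :=
    hVeq lam
  have hanti := antitoneOn_of_eqOn_bellman hp0.le hp1.le hr01.le hb0.le hb1 hC hfix
  have hconv := convexOn_of_eqOn_bellman hp0.le hp1.le hb0.le hb1 hC hfix
  exact ⟨hanti, hconv, hanti.const_add_mul_comp_beliefUpdate hp0.le hp1.le hb0.le lam,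
    hconv.const_add_mul_comp_beliefUpdate hp0.le hp1.le hb0.le lam,
    ρ1 + β * V 0 lam, fun π _ => by ring⟩

theorem stmt_2 (p ρ0 ρ1 β : ℝ)
    (hp0 : 0 < p) (hp1 : p < 1) (hr0 : 0 < ρ0) (hr01 : ρ0 < ρ1) (hr1 : ρ1 < 1)
    (hb0 : 0 < β) (hb1 : β < 1)
    (V : ℝ → ℝ → ℝ)
    (hVbd : ∀ lam : ℝ, ∃ C : ℝ, ∀ π ∈ Set.Icc (0:ℝ) 1, |V π lam| ≤ C)
    (hVeq : ∀ lam : ℝ, ∀ π ∈ Set.Icc (0:ℝ) 1,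
      V π lam = max (lam + β * V (π + p * (1 - π)) lam)
        (π * ρ0 + (1 - π) * ρ1 + β * V 0 lam)) :
    ∀ lam : ℝ,
      AntitoneOn (fun π => V π lam) (Set.Icc (0:ℝ) 1) ∧
      ConvexOn ℝ (Set.Icc (0:ℝ) 1) (fun π => V π lam) ∧
      AntitoneOn (fun π => lam + β * V (π + p * (1 - π)) lam) (Set.Icc (0:ℝ) 1) ∧
      ConvexOn ℝ (Set.Icc (0:ℝ) 1) (fun π => lam + β * V (π + p * (1 - π)) lam) ∧
      (∃ c : ℝ, ∀ π ∈ Set.Icc (0:ℝ) 1,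
        π * ρ0 + (1 - π) * ρ1 + β * V 0 lam = (ρ0 - ρ1) * π + c) :=
  stmt_2_general p ρ0 ρ1 β hp0 hp1 hr01 hb0 hb1 V hVbd hVeq
end

section
/- Set λ_H := ρ1 and λ_L := ρ1 + (1−β)·(ρ0 − ρ1) (equivalently λ_L = β·ρ1 + (1−β)·ρ0). If λ ≥ λ_H then V0(π,λ) ≥ V1(π,λ) for all π ∈ [0,1] (not playing is optimal at every belief), and if λ ≤ λ_L then V1(π,λ) ≥ V0(π,λ) for all π ∈ [0,1] (playing is optimal at every belief). -/
/-!
The Bellman operator of a two-action discounted problem is a `β`-contraction for the sup norm,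
so a bounded solution of the Bellman equation is unique. Hence it suffices to exhibit, in each
regime, an explicit solution on which the claimed action is optimal: for `λ ≥ ρ₁` the value of
never playing, the constant `λ / (1 - β)`; for `λ ≤ λ_L` the value of always playing,
`π ρ₀ + (1 - π) ρ₁ + β ρ₁ / (1 - β)`.
-/

open Set

theorem eqOn_zero_of_forall_abs_le_mul {α : Type*} {s : Set α} {d : α → ℝ} {β C : ℝ}
    (hβ0 : 0 ≤ β) (hβ1 : β < 1) (hC : ∀ x ∈ s, |d x| ≤ C)
    (hd : ∀ M, (∀ y ∈ s, |d y| ≤ M) → ∀ x ∈ s, |d x| ≤ β * M) :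
    EqOn d 0 s := by
  have hpow : ∀ n : ℕ, ∀ x ∈ s, |d x| ≤ β ^ n * C := by
    intro n
    induction n with
    | zero => simpa using hC
    | succ n ih => simpa only [pow_succ', mul_assoc] using hd _ ih
  intro x hx
  have hlim : Filter.Tendsto (fun n : ℕ => β ^ n * C) Filter.atTop (nhds 0) := by
    simpa using (tendsto_pow_atTop_nhds_zero_of_lt_one hβ0 hβ1).mul_const C
  exact abs_nonpos_iff.1 (ge_of_tendsto' hlim fun n => hpow n x hx)

section Bellman

variable {α : Type*} {s : Set α} {β : ℝ} {r₀ r₁ : α → ℝ} {σ τ : α → α}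

def IsBellmanSolution (s : Set α) (β : ℝ) (r₀ r₁ : α → ℝ) (σ τ : α → α) (W : α → ℝ) : Prop :=
  ∀ x ∈ s, W x = max (r₀ x + β * W (σ x)) (r₁ x + β * W (τ x))

theorem IsBellmanSolution.eqOn {V W : α → ℝ}
    (hV : IsBellmanSolution s β r₀ r₁ σ τ V) (hW : IsBellmanSolution s β r₀ r₁ σ τ W)
    (hσ : MapsTo σ s s) (hτ : MapsTo τ s s) (hβ0 : 0 ≤ β) (hβ1 : β < 1)
    (hVb : ∃ C, ∀ x ∈ s, |V x| ≤ C) (hWb : ∃ C, ∀ x ∈ s, |W x| ≤ C) :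
    EqOn V W s := by
  obtain ⟨CV, hCV⟩ := hVb
  obtain ⟨CW, hCW⟩ := hWb
  have hbound : ∀ x ∈ s, |V x - W x| ≤ CV + CW := fun x hx =>
    (abs_sub _ _).trans (add_le_add (hCV x hx) (hCW x hx))
  have hstep : ∀ M, (∀ y ∈ s, |V y - W y| ≤ M) → ∀ x ∈ s, |V x - W x| ≤ β * M := by
    intro M hM x hx
    have hterm : ∀ (r : ℝ) (y : α), y ∈ s → |r + β * V y - (r + β * W y)| ≤ β * M := by
      intro r y hy
      rw [add_sub_add_left_eq_sub, ← mul_sub, abs_mul, abs_of_nonneg hβ0]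
      exact mul_le_mul_of_nonneg_left (hM y hy) hβ0
    rw [hV x hx, hW x hx]
    exact (abs_max_sub_max_le_max _ _ _ _).trans
      (max_le (hterm _ _ (hσ hx)) (hterm _ _ (hτ hx)))
  exact fun x hx => sub_eq_zero.1 (eqOn_zero_of_forall_abs_le_mul hβ0 hβ1 hbound hstep hx)

end Bellman

section Model

variable {p ρ0 ρ1 β lam : ℝ}

theorem mapsTo_add_mul_one_sub (hp0 : 0 ≤ p) (hp1 : p ≤ 1) :
    MapsTo (fun π : ℝ => π + p * (1 - π)) (Icc 0 1) (Icc 0 1) := by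
  rintro π ⟨h0, h1⟩
  constructor <;> nlinarith

theorem mul_add_one_sub_mul_le (hρ : ρ0 ≤ ρ1) {π : ℝ} (hπ : 0 ≤ π) :
    π * ρ0 + (1 - π) * ρ1 ≤ ρ1 := by
  nlinarith

theorem isBellmanSolution_const (hρ : ρ0 ≤ ρ1) (hβ : β ≠ 1) (hlam : ρ1 ≤ lam) :
    IsBellmanSolution (Icc 0 1) β (fun _ => lam) (fun π => π * ρ0 + (1 - π) * ρ1)
      (fun π => π + p * (1 - π)) (fun _ => 0) (fun _ => lam / (1 - β)) := by
  rintro π ⟨hπ, -⟩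
  have hfix : lam + β * (lam / (1 - β)) = lam / (1 - β) := by
    field_simp [sub_ne_zero.2 hβ.symm]
    ring
  rw [max_eq_left, hfix]
  linarith [mul_add_one_sub_mul_le hρ hπ]

noncomputable def playValue (ρ0 ρ1 β π : ℝ) : ℝ :=
  π * ρ0 + (1 - π) * ρ1 + β * (ρ1 / (1 - β))

theorem playValue_zero (hβ : β ≠ 1) : playValue ρ0 ρ1 β 0 = ρ1 / (1 - β) := by
  unfold playValue
  field_simp [sub_ne_zero.2 hβ.symm]
  ring

theorem add_mul_playValue_le (hp0 : 0 ≤ p) (hρ : ρ0 ≤ ρ1) (hβ0 : 0 ≤ β) (hβ1 : β < 1)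
    (hlam : lam ≤ ρ1 + (1 - β) * (ρ0 - ρ1)) {π : ℝ} (hπ : π ∈ Icc (0 : ℝ) 1) :
    lam + β * playValue ρ0 ρ1 β (π + p * (1 - π))
      ≤ π * ρ0 + (1 - π) * ρ1 + β * playValue ρ0 ρ1 β 0 := by
  obtain ⟨h0, h1⟩ := hπ
  rw [playValue_zero hβ1.ne]
  unfold playValue
  have hc : (1 - β) * (ρ1 / (1 - β)) = ρ1 := mul_div_cancel₀ _ (by linarith)
  -- the slack is `(1 - π) (1 - β + β p) (ρ₁ - ρ₀)`
  have hslack : 0 ≤ (1 - π) * (1 - β + β * p) * (ρ1 - ρ0) :=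
    mul_nonneg (mul_nonneg (by linarith) (by nlinarith)) (by linarith)
  nlinarith

theorem isBellmanSolution_playValue (hp0 : 0 ≤ p) (hρ : ρ0 ≤ ρ1) (hβ0 : 0 ≤ β) (hβ1 : β < 1)
    (hlam : lam ≤ ρ1 + (1 - β) * (ρ0 - ρ1)) :
    IsBellmanSolution (Icc 0 1) β (fun _ => lam) (fun π => π * ρ0 + (1 - π) * ρ1)
      (fun π => π + p * (1 - π)) (fun _ => 0) (playValue ρ0 ρ1 β) := by
  intro π hπ
  rw [max_eq_right (add_mul_playValue_le hp0 hρ hβ0 hβ1 hlam hπ), playValue_zero hβ1.ne]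
  rfl

end Model

theorem exists_forall_abs_le_of_continuous {f : ℝ → ℝ} (hf : Continuous f) (a b : ℝ) :
    ∃ C, ∀ x ∈ Icc a b, |f x| ≤ C := by
  simpa only [Real.norm_eq_abs] using isCompact_Icc.exists_bound_of_continuousOn hf.continuousOn

theorem stmt_5_general (p ρ0 ρ1 β : ℝ)
    (hp0 : 0 < p) (hp1 : p < 1) (hr01 : ρ0 < ρ1)
    (hb0 : 0 < β) (hb1 : β < 1)
    (V : ℝ → ℝ → ℝ)
    (hVbd : ∀ lam : ℝ, ∃ C : ℝ, ∀ π ∈ Set.Icc (0:ℝ) 1, |V π lam| ≤ C)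
    (hVeq : ∀ lam : ℝ, ∀ π ∈ Set.Icc (0:ℝ) 1,
      V π lam = max (lam + β * V (π + p * (1 - π)) lam)
        (π * ρ0 + (1 - π) * ρ1 + β * V 0 lam)) :
    (∀ lam : ℝ, ρ1 ≤ lam → ∀ π ∈ Set.Icc (0:ℝ) 1,
      π * ρ0 + (1 - π) * ρ1 + β * V 0 lam ≤ lam + β * V (π + p * (1 - π)) lam) ∧
    (∀ lam : ℝ, lam ≤ ρ1 + (1 - β) * (ρ0 - ρ1) → ∀ π ∈ Set.Icc (0:ℝ) 1,
      lam + β * V (π + p * (1 - π)) lam ≤ π * ρ0 + (1 - π) * ρ1 + β * V 0 lam) := by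
  have hσ := mapsTo_add_mul_one_sub hp0.le hp1.le
  have hτ : MapsTo (fun _ : ℝ => (0 : ℝ)) (Icc 0 1) (Icc 0 1) := fun _ _ => ⟨le_rfl, zero_le_one⟩
  refine ⟨fun lam hlam π hπ => ?_, fun lam hlam π hπ => ?_⟩
  · have hVW := IsBellmanSolution.eqOn (V := fun π => V π lam) (hVeq lam)
      (isBellmanSolution_const hr01.le hb1.ne hlam) hσ hτ hb0.le hb1 (hVbd lam)
      (exists_forall_abs_le_of_continuous continuous_const 0 1)
    rw [show V _ lam = _ from hVW (hσ hπ), show V 0 lam = _ from hVW (hτ hπ)]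
    linarith [mul_add_one_sub_mul_le hr01.le hπ.1]
  · have hVW := IsBellmanSolution.eqOn (V := fun π => V π lam) (hVeq lam)
      (isBellmanSolution_playValue hp0.le hr01.le hb0.le hb1 hlam) hσ hτ hb0.le hb1 (hVbd lam)
      (exists_forall_abs_le_of_continuous (by unfold playValue; fun_prop) 0 1)
    rw [show V _ lam = _ from hVW (hσ hπ), show V 0 lam = _ from hVW (hτ hπ)]
    exact add_mul_playValue_le hp0.le hr01.le hb0.le hb1 hlam hπ

theorem stmt_5 (p ρ0 ρ1 β : ℝ)
    (hp0 : 0 < p) (hp1 : p < 1) (hr0 : 0 < ρ0) (hr01 : ρ0 < ρ1) (hr1 : ρ1 < 1)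
    (hb0 : 0 < β) (hb1 : β < 1)
    (V : ℝ → ℝ → ℝ)
    (hVbd : ∀ lam : ℝ, ∃ C : ℝ, ∀ π ∈ Set.Icc (0:ℝ) 1, |V π lam| ≤ C)
    (hVeq : ∀ lam : ℝ, ∀ π ∈ Set.Icc (0:ℝ) 1,
      V π lam = max (lam + β * V (π + p * (1 - π)) lam)
        (π * ρ0 + (1 - π) * ρ1 + β * V 0 lam)) :
    (∀ lam : ℝ, ρ1 ≤ lam → ∀ π ∈ Set.Icc (0:ℝ) 1,
      π * ρ0 + (1 - π) * ρ1 + β * V 0 lam ≤ lam + β * V (π + p * (1 - π)) lam) ∧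
    (∀ lam : ℝ, lam ≤ ρ1 + (1 - β) * (ρ0 - ρ1) → ∀ π ∈ Set.Icc (0:ℝ) 1,
      lam + β * V (π + p * (1 - π)) lam ≤ π * ρ0 + (1 - π) * ρ1 + β * V 0 lam) :=
  stmt_5_general p ρ0 ρ1 β hp0 hp1 hr01 hb0 hb1 V hVbd hVeq
end

section
/- For every fixed λ ∈ ℝ, the function π ↦ V1(π,λ) − V0(π,λ) is strictly decreasing on [0,1]; i.e., for all 0 ≤ π1 < π2 ≤ 1, V1(π2,λ) − V0(π2,λ) < V1(π1,λ) − V0(π1,λ). -/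
/-!
The play value minus the not-play value is, up to constants,
`(ρ1 - ρ0) * (1 - π) - β * V (π + p * (1 - π))`. The first term falls with slope `ρ1 - ρ0`,
so it suffices that `V` cannot fall faster than that: `V x - V y ≤ (ρ1 - ρ0) * (y - x)` for
`x ≤ y`. Comparing the two branches of the Bellman equation, the excess of `V x - V y` over
this bound is at most `β` times the excess at the updated beliefs (or zero); since the update
contracts distances by `1 - p`, iterating the bound against the a priori bound on `V` forces
the excess to vanish. The slope of the continuation term is then at most
`β (1 - p) (ρ1 - ρ0) < ρ1 - ρ0`.
-/

open Set Filter Topology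

theorem nonpos_of_le_max_mul_comp {α : Type*} {s : Set α} {T : α → α} (hT : MapsTo T s s)
    {E : α → ℝ} {β C : ℝ} (hβ0 : 0 ≤ β) (hβ1 : β < 1) (hC : ∀ a ∈ s, E a ≤ C)
    (hE : ∀ a ∈ s, E a ≤ max (β * E (T a)) 0) {a : α} (ha : a ∈ s) : E a ≤ 0 := by
  have hpow : ∀ n : ℕ, ∀ a ∈ s, E a ≤ β ^ n * max C 0 := by
    intro n
    induction n with
    | zero => exact fun a ha => by simpa using (hC a ha).trans (le_max_left C 0)
    | succ n ih =>
      intro a ha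
      refine (hE a ha).trans (max_le ?_ (by positivity))
      rw [pow_succ', mul_assoc]
      exact mul_le_mul_of_nonneg_left (ih (T a) (hT ha)) hβ0
  have hlim : Tendsto (fun n : ℕ => β ^ n * max C 0) atTop (𝓝 0) := by
    simpa using (tendsto_pow_atTop_nhds_zero_of_lt_one hβ0 hβ1).mul_const (max C 0)
  exact ge_of_tendsto hlim (Eventually.of_forall fun n => hpow n a ha)

theorem add_mul_one_sub_mem_Icc {p x : ℝ} (hp0 : 0 ≤ p) (hp1 : p ≤ 1) (hx : x ∈ Icc (0 : ℝ) 1) :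
    x + p * (1 - x) ∈ Icc (0 : ℝ) 1 :=
  ⟨by nlinarith [hx.1, hx.2], by nlinarith [hx.1, hx.2]⟩

section Bellman

variable {p ρ0 ρ1 β c : ℝ} {v : ℝ → ℝ}

theorem bellman_sub_le_max
    (hv : ∀ π ∈ Icc (0 : ℝ) 1,
      v π = max (c + β * v (π + p * (1 - π))) (π * ρ0 + (1 - π) * ρ1 + β * v 0))
    {x y : ℝ} (hx : x ∈ Icc (0 : ℝ) 1) (hy : y ∈ Icc (0 : ℝ) 1) :
    v x - v y ≤ max (β * (v (x + p * (1 - x)) - v (y + p * (1 - y)))) ((ρ1 - ρ0) * (y - x)) := by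
  rw [hv x hx, hv y hy]
  refine (max_sub_max_le_max _ _ _ _).trans_eq ?_
  congr 1 <;> ring

theorem bellman_sub_le_mul_sub (hp0 : 0 ≤ p) (hp1 : p ≤ 1) (hρ : ρ0 ≤ ρ1) (hβ0 : 0 ≤ β)
    (hβ1 : β < 1) (hbd : ∃ C, ∀ π ∈ Icc (0 : ℝ) 1, |v π| ≤ C)
    (hv : ∀ π ∈ Icc (0 : ℝ) 1,
      v π = max (c + β * v (π + p * (1 - π))) (π * ρ0 + (1 - π) * ρ1 + β * v 0))
    {x y : ℝ} (hx : 0 ≤ x) (hxy : x ≤ y) (hy : y ≤ 1) :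
    v x - v y ≤ (ρ1 - ρ0) * (y - x) := by
  obtain ⟨C, hC⟩ := hbd
  set s : Set (ℝ × ℝ) := {q | 0 ≤ q.1 ∧ q.1 ≤ q.2 ∧ q.2 ≤ 1}
  have hs : ∀ q ∈ s, q.1 ∈ Icc (0 : ℝ) 1 ∧ q.2 ∈ Icc (0 : ℝ) 1 := fun q ⟨h1, h12, h2⟩ =>
    ⟨⟨h1, h12.trans h2⟩, ⟨h1.trans h12, h2⟩⟩
  let T : ℝ × ℝ → ℝ × ℝ := fun q => (q.1 + p * (1 - q.1), q.2 + p * (1 - q.2))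
  let E : ℝ × ℝ → ℝ := fun q => v q.1 - v q.2 - (ρ1 - ρ0) * (q.2 - q.1)
  have hT : MapsTo T s s := fun q hq =>
    ⟨(add_mul_one_sub_mem_Icc hp0 hp1 (hs q hq).1).1,
      by nlinarith [hq.2.1], (add_mul_one_sub_mem_Icc hp0 hp1 (hs q hq).2).2⟩
  have hE_bdd : ∀ q ∈ s, E q ≤ 2 * C := fun q hq => by
    have h1 := abs_le.mp (hC q.1 (hs q hq).1)
    have h2 := abs_le.mp (hC q.2 (hs q hq).2)
    nlinarith [hq.2.1]
  -- the update shrinks `y - x` to `(1 - p) * (y - x)`, and `β * (1 - p) ≤ 1`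
  have hE_step : ∀ q ∈ s, E q ≤ max (β * E (T q)) 0 := fun q hq => by
    have hstep := bellman_sub_le_max hv (hs q hq).1 (hs q hq).2
    have hslack : 0 ≤ (ρ1 - ρ0) * (q.2 - q.1) * (1 - β * (1 - p)) :=
      mul_nonneg (mul_nonneg (by linarith) (by linarith [hq.2.1])) (by nlinarith)
    simp only [E, T, le_max_iff] at hstep ⊢
    rcases hstep with h | h
    · left; nlinarith
    · right; linarith
  simpa [E, sub_nonpos] using
    nonpos_of_le_max_mul_comp hT hβ0 hβ1 hE_bdd hE_step (show (x, y) ∈ s from ⟨hx, hxy, hy⟩)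

end Bellman

theorem stmt_9_general (p ρ0 ρ1 β : ℝ)
    (hp0 : 0 < p) (hp1 : p < 1) (hr01 : ρ0 < ρ1)
    (hb0 : 0 < β) (hb1 : β < 1)
    (V : ℝ → ℝ → ℝ)
    (hVbd : ∀ lam : ℝ, ∃ C : ℝ, ∀ π ∈ Set.Icc (0:ℝ) 1, |V π lam| ≤ C)
    (hVeq : ∀ lam : ℝ, ∀ π ∈ Set.Icc (0:ℝ) 1,
      V π lam = max (lam + β * V (π + p * (1 - π)) lam)
        (π * ρ0 + (1 - π) * ρ1 + β * V 0 lam)) :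
    ∀ lam : ℝ, ∀ π1 π2 : ℝ, 0 ≤ π1 → π1 < π2 → π2 ≤ 1 →
      (π2 * ρ0 + (1 - π2) * ρ1 + β * V 0 lam) - (lam + β * V (π2 + p * (1 - π2)) lam) <
      (π1 * ρ0 + (1 - π1) * ρ1 + β * V 0 lam) - (lam + β * V (π1 + p * (1 - π1)) lam) := by
  intro lam π1 π2 h0 h12 h21
  have hπ1 : π1 ∈ Icc (0 : ℝ) 1 := ⟨h0, h12.le.trans h21⟩
  have hπ2 : π2 ∈ Icc (0 : ℝ) 1 := ⟨h0.trans h12.le, h21⟩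
  have hcont := bellman_sub_le_mul_sub (v := (V · lam)) hp0.le hp1.le hr01.le hb0.le hb1
    (hVbd lam) (hVeq lam) (add_mul_one_sub_mem_Icc hp0.le hp1.le hπ1).1
    (by nlinarith) (add_mul_one_sub_mem_Icc hp0.le hp1.le hπ2).2
  have hgap : 0 < (ρ1 - ρ0) * (π2 - π1) * (1 - β * (1 - p)) :=
    mul_pos (mul_pos (by linarith) (by linarith)) (by nlinarith)
  nlinarith [mul_le_mul_of_nonneg_left hcont hb0.le]

theorem stmt_9 (p ρ0 ρ1 β : ℝ)
    (hp0 : 0 < p) (hp1 : p < 1) (hr0 : 0 < ρ0) (hr01 : ρ0 < ρ1) (hr1 : ρ1 < 1)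
    (hb0 : 0 < β) (hb1 : β < 1)
    (V : ℝ → ℝ → ℝ)
    (hVbd : ∀ lam : ℝ, ∃ C : ℝ, ∀ π ∈ Set.Icc (0:ℝ) 1, |V π lam| ≤ C)
    (hVeq : ∀ lam : ℝ, ∀ π ∈ Set.Icc (0:ℝ) 1,
      V π lam = max (lam + β * V (π + p * (1 - π)) lam)
        (π * ρ0 + (1 - π) * ρ1 + β * V 0 lam)) :
    ∀ lam : ℝ, ∀ π1 π2 : ℝ, 0 ≤ π1 → π1 < π2 → π2 ≤ 1 →
      (π2 * ρ0 + (1 - π2) * ρ1 + β * V 0 lam) - (lam + β * V (π2 + p * (1 - π2)) lam) <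
      (π1 * ρ0 + (1 - π1) * ρ1 + β * V 0 lam) - (lam + β * V (π1 + p * (1 - π1)) lam) :=
  stmt_9_general p ρ0 ρ1 β hp0 hp1 hr01 hb0 hb1 V hVbd hVeq
end

section
/- Let λ_L := ρ0 + β·p·(ρ0 − ρ1) and λ_H := ρ1, and let λ ∈ [λ_L, λ_H]. Then the optimal policy is of threshold type with a single threshold: there exists a unique π_T ∈ [0,1] such that V1(π_T,λ) = V0(π_T,λ), and for all π ∈ [0,1], V(π,λ) = V1(π,λ) if π ≤ π_T, while V(π,λ) = V0(π,λ) if π ≥ π_T. -/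
/-!
The Bellman operator is a `β`-contraction that preserves the bound
`|V π - V π'| ≤ (ρ1 - ρ0) |π - π'|`, so `V(·, λ)` is `(ρ1 - ρ0)`-Lipschitz. Hence the gap
`V1 - V0` between playing and not playing decreases strictly, with slope at least
`(ρ1 - ρ0) (1 - β (1 - p)) > 0`. It is nonnegative at `π = 0` because `λ ≤ ρ1` and never playing
is worth only `λ / (1 - β)`, and nonpositive at `π = 1` because `λ ≥ λ_L`; its unique zero on
`[0, 1]` is the threshold.
-/

open Set Filter Topology

theorem le_zero_of_le_mul_of_le {α : Type*} {S : Set α} {E : α → ℝ} {β B : ℝ}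
    (hβ0 : 0 ≤ β) (hβ1 : β < 1) (hB : ∀ a ∈ S, E a ≤ B)
    (hstep : ∀ a ∈ S, ∃ b ∈ S, E a ≤ β * E b) : ∀ a ∈ S, E a ≤ 0 := by
  have hpow : ∀ n : ℕ, ∀ a ∈ S, E a ≤ β ^ n * B := by
    intro n
    induction n with
    | zero => simpa using hB
    | succ n ih =>
      intro a ha
      obtain ⟨b, hb, hab⟩ := hstep a ha
      calc E a ≤ β * E b := hab
        _ ≤ β * (β ^ n * B) := mul_le_mul_of_nonneg_left (ih b hb) hβ0
        _ = β ^ (n + 1) * B := by ring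
  intro a ha
  have hlim : Tendsto (fun n : ℕ => β ^ n * B) atTop (𝓝 0) := by
    simpa using (tendsto_pow_atTop_nhds_zero_of_lt_one hβ0 hβ1).mul_const B
  exact ge_of_tendsto' hlim fun n => hpow n a ha

theorem StrictAntiOn.exists_threshold {g : ℝ → ℝ} {a b : ℝ} (hab : a ≤ b)
    (hg : StrictAntiOn g (Icc a b)) (hc : ContinuousOn g (Icc a b)) (hb : g b ≤ 0)
    (ha : 0 ≤ g a) :
    ∃ t ∈ Icc a b, g t = 0 ∧ (∀ x ∈ Icc a b, g x = 0 → x = t) ∧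
      ∀ x ∈ Icc a b, (x ≤ t → 0 ≤ g x) ∧ (t ≤ x → g x ≤ 0) := by
  obtain ⟨t, ht, hgt⟩ := intermediate_value_Icc' hab hc ⟨hb, ha⟩
  refine ⟨t, ht, hgt, fun x hx hgx => hg.injOn hx ht (hgx.trans hgt.symm), fun x hx => ?_⟩
  exact ⟨fun hxt => hgt ▸ hg.antitoneOn hx ht hxt, fun htx => hgt ▸ hg.antitoneOn ht hx htx⟩

theorem one_sub_mul_mem_Icc {p π : ℝ} (hp0 : 0 ≤ p) (hp1 : p ≤ 1) (hπ : π ∈ Icc (0 : ℝ) 1) :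
    (1 - p) * π ∈ Icc (0 : ℝ) 1 :=
  unitInterval.mul_mem ⟨by linarith, by linarith⟩ hπ

namespace RestlessBandit

def playValue (ρ0 ρ1 β : ℝ) (f : ℝ → ℝ) (π : ℝ) : ℝ := π * ρ0 + (1 - π) * ρ1 + β * f 1

def waitValue (p β lam : ℝ) (f : ℝ → ℝ) (π : ℝ) : ℝ := lam + β * f ((1 - p) * π)

def SolvesBellman (p ρ0 ρ1 β lam : ℝ) (f : ℝ → ℝ) : Prop :=
  ∀ π ∈ Icc (0 : ℝ) 1, f π = max (waitValue p β lam f π) (playValue ρ0 ρ1 β f π)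

def gap (p ρ0 ρ1 β lam : ℝ) (f : ℝ → ℝ) (π : ℝ) : ℝ :=
  playValue ρ0 ρ1 β f π - waitValue p β lam f π

variable {p ρ0 ρ1 β lam : ℝ} {f : ℝ → ℝ}

theorem SolvesBellman.eq_playValue (hf : SolvesBellman p ρ0 ρ1 β lam f) {π : ℝ}
    (hπ : π ∈ Icc (0 : ℝ) 1) (h : 0 ≤ gap p ρ0 ρ1 β lam f π) :
    f π = playValue ρ0 ρ1 β f π :=
  (hf π hπ).trans (max_eq_right (sub_nonneg.mp h))

theorem SolvesBellman.eq_waitValue (hf : SolvesBellman p ρ0 ρ1 β lam f) {π : ℝ}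
    (hπ : π ∈ Icc (0 : ℝ) 1) (h : gap p ρ0 ρ1 β lam f π ≤ 0) :
    f π = waitValue p β lam f π :=
  (hf π hπ).trans (max_eq_left (sub_nonpos.mp h))

theorem SolvesBellman.abs_sub_le_max (hf : SolvesBellman p ρ0 ρ1 β lam f) {x y : ℝ}
    (hx : x ∈ Icc (0 : ℝ) 1) (hy : y ∈ Icc (0 : ℝ) 1) (hρ : ρ0 ≤ ρ1) (hβ0 : 0 ≤ β) :
    |f x - f y| ≤ max (β * |f ((1 - p) * x) - f ((1 - p) * y)|) ((ρ1 - ρ0) * |x - y|) := by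
  rw [hf x hx, hf y hy]
  refine (abs_max_sub_max_le_max _ _ _ _).trans (le_of_eq ?_)
  simp only [waitValue, playValue]
  rw [show lam + β * f ((1 - p) * x) - (lam + β * f ((1 - p) * y))
      = β * (f ((1 - p) * x) - f ((1 - p) * y)) by ring,
    show x * ρ0 + (1 - x) * ρ1 + β * f 1 - (y * ρ0 + (1 - y) * ρ1 + β * f 1)
      = (ρ1 - ρ0) * -(x - y) by ring,
    abs_mul, abs_mul, abs_neg, abs_of_nonneg hβ0, abs_of_nonneg (by linarith : 0 ≤ ρ1 - ρ0)]

theorem SolvesBellman.abs_sub_le (hf : SolvesBellman p ρ0 ρ1 β lam f)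
    (hbdd : ∃ C, ∀ π ∈ Icc (0 : ℝ) 1, |f π| ≤ C)
    (hp0 : 0 ≤ p) (hp1 : p ≤ 1) (hρ : ρ0 ≤ ρ1) (hβ0 : 0 ≤ β) (hβ1 : β < 1) :
    ∀ x ∈ Icc (0 : ℝ) 1, ∀ y ∈ Icc (0 : ℝ) 1, |f x - f y| ≤ (ρ1 - ρ0) * |x - y| := by
  obtain ⟨C, hC⟩ := hbdd
  set excess : ℝ × ℝ → ℝ := fun z => max (|f z.1 - f z.2| - (ρ1 - ρ0) * |z.1 - z.2|) 0
  have hbound : ∀ z ∈ Icc (0 : ℝ) 1 ×ˢ Icc (0 : ℝ) 1, excess z ≤ 2 * C := by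
    rintro ⟨x, y⟩ ⟨hx, hy⟩
    have hCx := hC x hx
    have hCy := hC y hy
    have := abs_sub (f x) (f y)
    have : 0 ≤ (ρ1 - ρ0) * |x - y| := mul_nonneg (by linarith) (abs_nonneg _)
    exact max_le (by linarith) (by linarith [abs_nonneg (f x)])
  have hstep : ∀ z ∈ Icc (0 : ℝ) 1 ×ˢ Icc (0 : ℝ) 1,
      ∃ w ∈ Icc (0 : ℝ) 1 ×ˢ Icc (0 : ℝ) 1, excess z ≤ β * excess w := by
    rintro ⟨x, y⟩ ⟨hx, hy⟩
    refine ⟨((1 - p) * x, (1 - p) * y),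
      ⟨one_sub_mul_mem_Icc hp0 hp1 hx, one_sub_mul_mem_Icc hp0 hp1 hy⟩, ?_⟩
    have hmax := hf.abs_sub_le_max hx hy hρ hβ0
    have hshrink : β * ((ρ1 - ρ0) * |(1 - p) * x - (1 - p) * y|) ≤ (ρ1 - ρ0) * |x - y| := by
      rw [← mul_sub, abs_mul, abs_of_nonneg (by linarith : 0 ≤ 1 - p)]
      have : 0 ≤ (ρ1 - ρ0) * |x - y| := mul_nonneg (by linarith) (abs_nonneg _)
      nlinarith [mul_le_one₀ hβ1.le (by linarith : 0 ≤ 1 - p) (by linarith : 1 - p ≤ 1)]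
    have hle := le_max_left (|f ((1 - p) * x) - f ((1 - p) * y)|
      - (ρ1 - ρ0) * |(1 - p) * x - (1 - p) * y|) 0
    have hnonneg := le_max_right (|f ((1 - p) * x) - f ((1 - p) * y)|
      - (ρ1 - ρ0) * |(1 - p) * x - (1 - p) * y|) 0
    refine max_le ?_ (mul_nonneg hβ0 hnonneg)
    rcases le_max_iff.mp hmax with h | h <;> nlinarith
  intro x hx y hy
  have := le_zero_of_le_mul_of_le hβ0 hβ1 hbound hstep (x, y) ⟨hx, hy⟩
  linarith [le_max_left (|f x - f y| - (ρ1 - ρ0) * |x - y|) 0]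

/-- Never playing is worth `lam / (1 - β)`. -/
theorem SolvesBellman.div_one_sub_le (hf : SolvesBellman p ρ0 ρ1 β lam f)
    (hbdd : ∃ C, ∀ π ∈ Icc (0 : ℝ) 1, |f π| ≤ C)
    (hp0 : 0 ≤ p) (hp1 : p ≤ 1) (hβ0 : 0 ≤ β) (hβ1 : β < 1) :
    ∀ π ∈ Icc (0 : ℝ) 1, lam / (1 - β) ≤ f π := by
  obtain ⟨C, hC⟩ := hbdd
  have hfix : lam + β * (lam / (1 - β)) = lam / (1 - β) := by
    field_simp [(by linarith : (1 - β) ≠ 0)]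
    ring
  have hbound : ∀ π ∈ Icc (0 : ℝ) 1, lam / (1 - β) - f π ≤ lam / (1 - β) + C := fun π hπ => by
    linarith [neg_abs_le (f π), hC π hπ]
  have hstep : ∀ π ∈ Icc (0 : ℝ) 1, ∃ π' ∈ Icc (0 : ℝ) 1,
      lam / (1 - β) - f π ≤ β * (lam / (1 - β) - f π') := fun π hπ => by
    refine ⟨(1 - p) * π, one_sub_mul_mem_Icc hp0 hp1 hπ, ?_⟩
    have hwait : waitValue p β lam f π ≤ f π := hf π hπ ▸ le_max_left _ _
    simp only [waitValue] at hwait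
    linarith
  intro π hπ
  linarith [le_zero_of_le_mul_of_le hβ0 hβ1 hbound hstep π hπ]

section Gap

variable (hLip : ∀ x ∈ Icc (0 : ℝ) 1, ∀ y ∈ Icc (0 : ℝ) 1, |f x - f y| ≤ (ρ1 - ρ0) * |x - y|)
include hLip

theorem gap_strictAntiOn (hp0 : 0 ≤ p) (hp1 : p ≤ 1) (hρ : ρ0 < ρ1) (hβ0 : 0 ≤ β)
    (hβ1 : β < 1) : StrictAntiOn (gap p ρ0 ρ1 β lam f) (Icc 0 1) := by
  intro x hx y hy hxy
  have h := hLip _ (one_sub_mul_mem_Icc hp0 hp1 hx) _ (one_sub_mul_mem_Icc hp0 hp1 hy)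
  rw [← mul_sub, abs_mul, abs_of_nonneg (by linarith : 0 ≤ 1 - p),
    abs_of_neg (by linarith : x - y < 0)] at h
  have hslope : 0 < (ρ1 - ρ0) * (y - x) * (1 - β * (1 - p)) := by
    have : β * (1 - p) < 1 := by nlinarith
    have : 0 < y - x := by linarith
    positivity
  have := mul_le_mul_of_nonneg_left (le_abs_self (f ((1 - p) * x) - f ((1 - p) * y))) hβ0
  simp only [gap, playValue, waitValue]
  nlinarith

theorem gap_continuousOn (hp0 : 0 ≤ p) (hp1 : p ≤ 1) :
    ContinuousOn (gap p ρ0 ρ1 β lam f) (Icc 0 1) := by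
  have hf : ContinuousOn f (Icc 0 1) := by
    refine (LipschitzOnWith.of_dist_le_mul (K := (ρ1 - ρ0).toNNReal)
      fun x hx y hy => ?_).continuousOn
    rw [Real.dist_eq, Real.dist_eq]
    exact (hLip x hx y hy).trans
      (mul_le_mul_of_nonneg_right (Real.le_coe_toNNReal _) (abs_nonneg _))
  have hcomp : ContinuousOn (fun π => f ((1 - p) * π)) (Icc 0 1) :=
    hf.comp (by fun_prop) fun π hπ => one_sub_mul_mem_Icc hp0 hp1 hπ
  have hplay : Continuous fun π => π * ρ0 + (1 - π) * ρ1 + β * f 1 := by fun_prop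
  exact hplay.continuousOn.sub (continuousOn_const.add (continuousOn_const.mul hcomp))

end Gap

theorem SolvesBellman.gap_zero_nonneg (hf : SolvesBellman p ρ0 ρ1 β lam f)
    (hlow : ∀ π ∈ Icc (0 : ℝ) 1, lam / (1 - β) ≤ f π) (hlam : lam ≤ ρ1) (hβ0 : 0 ≤ β)
    (hβ1 : β < 1) : 0 ≤ gap p ρ0 ρ1 β lam f 0 := by
  by_contra! hneg
  have h0 := hf.eq_waitValue ⟨le_rfl, zero_le_one⟩ hneg.le
  simp only [waitValue, mul_zero] at h0
  have hf0 : f 0 = lam / (1 - β) := by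
    rw [eq_div_iff (by linarith)]
    linarith
  have := mul_le_mul_of_nonneg_left (hf0 ▸ hlow 1 ⟨zero_le_one, le_rfl⟩) hβ0
  simp only [gap, playValue, waitValue, mul_zero] at hneg
  linarith

theorem SolvesBellman.gap_one_nonpos (hf : SolvesBellman p ρ0 ρ1 β lam f)
    (hlam : ρ0 + β * p * (ρ0 - ρ1) ≤ lam) (hp0 : 0 ≤ p) (hp1 : p ≤ 1) (hβ0 : 0 ≤ β) :
    gap p ρ0 ρ1 β lam f 1 ≤ 0 := by
  by_contra! hpos
  have h1 := hf.eq_playValue ⟨zero_le_one, le_rfl⟩ hpos.le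
  simp only [playValue] at h1
  have hplay : playValue ρ0 ρ1 β f ((1 - p) * 1) ≤ f ((1 - p) * 1) :=
    hf _ (one_sub_mul_mem_Icc hp0 hp1 ⟨zero_le_one, le_rfl⟩) ▸ le_max_right _ _
  have := mul_le_mul_of_nonneg_left hplay hβ0
  simp only [gap, playValue, waitValue] at hpos this
  nlinarith

end RestlessBandit

open RestlessBandit in
theorem stmt_10_general (p ρ0 ρ1 β lam : ℝ)
    (hp0 : 0 < p) (hp1 : p < 1) (hr01 : ρ0 < ρ1)
    (hb0 : 0 < β) (hb1 : β < 1)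
    (V : ℝ → ℝ → ℝ)
    (hVbd : ∀ lam : ℝ, ∃ C : ℝ, ∀ π ∈ Set.Icc (0:ℝ) 1, |V π lam| ≤ C)
    (hVeq : ∀ lam : ℝ, ∀ π ∈ Set.Icc (0:ℝ) 1,
      V π lam = max (lam + β * V ((1 - p) * π) lam)
        (π * ρ0 + (1 - π) * ρ1 + β * V 1 lam))
    (hlam : lam ∈ Set.Icc (ρ0 + β * p * (ρ0 - ρ1)) ρ1) :
    ∃ πT ∈ Set.Icc (0:ℝ) 1,
      (πT * ρ0 + (1 - πT) * ρ1 + β * V 1 lam = lam + β * V ((1 - p) * πT) lam) ∧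
      (∀ π' ∈ Set.Icc (0:ℝ) 1,
        π' * ρ0 + (1 - π') * ρ1 + β * V 1 lam = lam + β * V ((1 - p) * π') lam → π' = πT) ∧
      (∀ π ∈ Set.Icc (0:ℝ) 1,
        (π ≤ πT → V π lam = π * ρ0 + (1 - π) * ρ1 + β * V 1 lam) ∧
        (πT ≤ π → V π lam = lam + β * V ((1 - p) * π) lam)) := by
  have hf : SolvesBellman p ρ0 ρ1 β lam (V · lam) := hVeq lam
  have hLip := hf.abs_sub_le (hVbd lam) hp0.le hp1.le hr01.le hb0.le hb1
  have hlow := hf.div_one_sub_le (hVbd lam) hp0.le hp1.le hb0.le hb1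
  obtain ⟨πT, hπT, hzero, huniq, hsign⟩ :=
    (gap_strictAntiOn hLip hp0.le hp1.le hr01 hb0.le hb1).exists_threshold zero_le_one
      (gap_continuousOn hLip hp0.le hp1.le) (hf.gap_one_nonpos hlam.1 hp0.le hp1.le hb0.le)
      (hf.gap_zero_nonneg hlow hlam.2 hb0.le hb1)
  refine ⟨πT, hπT, sub_eq_zero.mp hzero, fun π hπ h => huniq π hπ (sub_eq_zero.mpr h),
    fun π hπ => ⟨fun hle => ?_, fun hge => ?_⟩⟩
  · exact hf.eq_playValue hπ ((hsign π hπ).1 hle)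
  · exact hf.eq_waitValue hπ ((hsign π hπ).2 hge)

theorem stmt_10 (p ρ0 ρ1 β lam : ℝ)
    (hp0 : 0 < p) (hp1 : p < 1) (hr0 : 0 < ρ0) (hr01 : ρ0 < ρ1) (hr1 : ρ1 < 1)
    (hb0 : 0 < β) (hb1 : β < 1)
    (V : ℝ → ℝ → ℝ)
    (hVbd : ∀ lam : ℝ, ∃ C : ℝ, ∀ π ∈ Set.Icc (0:ℝ) 1, |V π lam| ≤ C)
    (hVeq : ∀ lam : ℝ, ∀ π ∈ Set.Icc (0:ℝ) 1,
      V π lam = max (lam + β * V ((1 - p) * π) lam)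
        (π * ρ0 + (1 - π) * ρ1 + β * V 1 lam))
    (hlam : lam ∈ Set.Icc (ρ0 + β * p * (ρ0 - ρ1)) ρ1) :
    ∃ πT ∈ Set.Icc (0:ℝ) 1,
      (πT * ρ0 + (1 - πT) * ρ1 + β * V 1 lam = lam + β * V ((1 - p) * πT) lam) ∧
      (∀ π' ∈ Set.Icc (0:ℝ) 1,
        π' * ρ0 + (1 - π') * ρ1 + β * V 1 lam = lam + β * V ((1 - p) * π') lam → π' = πT) ∧
      (∀ π ∈ Set.Icc (0:ℝ) 1,
        (π ≤ πT → V π lam = π * ρ0 + (1 - π) * ρ1 + β * V 1 lam) ∧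
        (πT ≤ π → V π lam = lam + β * V ((1 - p) * π) lam)) :=
  stmt_10_general p ρ0 ρ1 β lam hp0 hp1 hr01 hb0 hb1 V hVbd hVeq hlam
end

section
/- The type-A arm is Whittle indexable on [λ_L, λ_H], where λ_L := ρ0 + β·p·(ρ0 − ρ1) and λ_H := ρ1: defining P(λ) := {π ∈ [0,1] : V1(π,λ) ≤ V0(π,λ)} (the set of beliefs at which not playing is optimal under subsidy λ), one has P(λ1) ⊆ P(λ2) whenever λ_L ≤ λ1 < λ2 ≤ λ_H. -/
/-!
Write `Δ x = V x λ₂ - V x λ₁` and `d = λ₂ - λ₁ > 0`. Subtracting the Bellman equations at the two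
subsidies and using `min (a₂ - a₁) (b₂ - b₁) ≤ max a₂ b₂ - max a₁ b₁ ≤ max (a₂ - a₁) (b₂ - b₁)`
sandwiches `Δ x` between the minimum and the maximum of `d + β Δ((1-p)x)` and `β Δ 1`.
Passing to `sup Δ` and `inf Δ` over `[0,1]` gives `(1 - β) Δ ≤ d` and `β Δ 1 ≤ Δ`, which together
yield `β Δ 1 ≤ d + β Δ y` for every belief `y`: exactly the inequality that carries
"not playing is optimal" from subsidy `λ₁` to subsidy `λ₂`.
-/

open Set

theorem min_sub_sub_le_max_sub_max {α : Type*} [LinearOrder α] [AddCommGroup α]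
    [IsOrderedAddMonoid α] (a b c d : α) : min (a - c) (b - d) ≤ max a b - max c d := by
  have h := max_sub_max_le_max c d a b
  rw [← neg_sub a c, ← neg_sub b d, max_neg_neg, ← neg_sub (max a b)] at h
  exact neg_le_neg_iff.mp h

section Sandwich

variable {S : Set ℝ} {f g : ℝ → ℝ} {x₀ d β : ℝ}

theorem one_sub_mul_le_of_le_max (hbdd : BddAbove (f '' S)) (hg : MapsTo g S S) (hx₀ : x₀ ∈ S)
    (hd : 0 ≤ d) (hβ : 0 ≤ β) (hβ₁ : β ≤ 1)
    (hle : ∀ x ∈ S, f x ≤ max (d + β * f (g x)) (β * f x₀)) :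
    ∀ x ∈ S, (1 - β) * f x ≤ d := by
  have hf_le : ∀ x ∈ S, f x ≤ sSup (f '' S) := fun x hx => le_csSup hbdd (mem_image_of_mem f hx)
  have hsup : sSup (f '' S) ≤ d + β * sSup (f '' S) := by
    refine csSup_le ((nonempty_of_mem hx₀).image f) (forall_mem_image.mpr fun x hx => ?_)
    refine (hle x hx).trans (max_le ?_ ?_)
    · gcongr; exact hf_le _ (hg hx)
    · linarith [mul_le_mul_of_nonneg_left (hf_le x₀ hx₀) hβ]
  intro x hx
  nlinarith [mul_le_mul_of_nonneg_left (hf_le x hx) (sub_nonneg.mpr hβ₁)]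

theorem mul_le_of_min_le (hbdd : BddBelow (f '' S)) (hg : MapsTo g S S) (hx₀ : x₀ ∈ S)
    (hd : 0 ≤ d) (hβ : 0 ≤ β) (hβ₁ : β < 1)
    (hge : ∀ x ∈ S, min (d + β * f (g x)) (β * f x₀) ≤ f x)
    (hupper : ∀ x ∈ S, (1 - β) * f x ≤ d) :
    ∀ x ∈ S, β * f x₀ ≤ f x := by
  set m := sInf (f '' S)
  have hm_le : ∀ x ∈ S, m ≤ f x := fun x hx => csInf_le hbdd (mem_image_of_mem f hx)
  have hinf : min (d + β * m) (β * f x₀) ≤ m := by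
    refine le_csInf ((nonempty_of_mem hx₀).image f) (forall_mem_image.mpr fun x hx => ?_)
    refine le_trans ?_ (hge x hx)
    gcongr
    exact hm_le _ (hg hx)
  suffices hkey : β * f x₀ ≤ m from fun x hx => hkey.trans (hm_le x hx)
  by_contra! hlt
  -- Otherwise `d + β m ≤ m`, so `m ≥ d / (1 - β) ≥ f x₀` and `m ≥ 0`, forcing `β f x₀ ≤ m`.
  have hdm : d ≤ (1 - β) * m := by
    rcases min_le_iff.mp hinf with h | h
    · linarith
    · exact absurd h hlt.not_ge
  have hx₀m : f x₀ ≤ m := le_of_mul_le_mul_left ((hupper x₀ hx₀).trans hdm) (by linarith)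
  have hm : 0 ≤ m := nonneg_of_mul_nonneg_right (hd.trans hdm) (by linarith)
  nlinarith

theorem mul_le_add_mul_of_sandwich (hbdd : Bornology.IsBounded (f '' S)) (hg : MapsTo g S S)
    (hx₀ : x₀ ∈ S) (hd : 0 ≤ d) (hβ : 0 ≤ β) (hβ₁ : β < 1)
    (hsandwich : ∀ x ∈ S, min (d + β * f (g x)) (β * f x₀) ≤ f x ∧
      f x ≤ max (d + β * f (g x)) (β * f x₀)) :
    ∀ y ∈ S, β * f x₀ ≤ d + β * f y := by
  have hupper := one_sub_mul_le_of_le_max hbdd.bddAbove hg hx₀ hd hβ hβ₁.le fun x hx => (hsandwich x hx).2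
  have hlower := mul_le_of_min_le hbdd.bddBelow hg hx₀ hd hβ hβ₁ (fun x hx => (hsandwich x hx).1)
    hupper
  intro y hy
  have hy := mul_le_mul_of_nonneg_left (hlower y hy) hβ
  nlinarith [mul_le_mul_of_nonneg_left (hupper x₀ hx₀) hβ]

end Sandwich

theorem bellman_sub_sandwich {S : Set ℝ} {g r : ℝ → ℝ} {V : ℝ → ℝ → ℝ} {x₀ β lam₁ lam₂ : ℝ}
    (hV : ∀ lam, ∀ x ∈ S, V x lam = max (lam + β * V (g x) lam) (r x + β * V x₀ lam))
    {x : ℝ} (hx : x ∈ S) :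
    let Δ := fun y => V y lam₂ - V y lam₁
    min (lam₂ - lam₁ + β * Δ (g x)) (β * Δ x₀) ≤ Δ x ∧
      Δ x ≤ max (lam₂ - lam₁ + β * Δ (g x)) (β * Δ x₀) := by
  intro Δ
  have ha : lam₂ + β * V (g x) lam₂ - (lam₁ + β * V (g x) lam₁) = lam₂ - lam₁ + β * Δ (g x) := by
    ring
  have hb : r x + β * V x₀ lam₂ - (r x + β * V x₀ lam₁) = β * Δ x₀ := by ring
  simp only [Δ, hV lam₁ x hx, hV lam₂ x hx]
  rw [← ha, ← hb]
  exact ⟨min_sub_sub_le_max_sub_max _ _ _ _, max_sub_max_le_max _ _ _ _⟩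

theorem stmt_16_general (p ρ0 ρ1 β : ℝ)
    (hp0 : 0 < p) (hp1 : p < 1)
    (hb0 : 0 < β) (hb1 : β < 1)
    (V : ℝ → ℝ → ℝ)
    (hVbd : ∀ lam : ℝ, ∃ C : ℝ, ∀ π ∈ Set.Icc (0:ℝ) 1, |V π lam| ≤ C)
    (hVeq : ∀ lam : ℝ, ∀ π ∈ Set.Icc (0:ℝ) 1,
      V π lam = max (lam + β * V ((1 - p) * π) lam)
        (π * ρ0 + (1 - π) * ρ1 + β * V 1 lam)) :
    ∀ lam1 lam2 : ℝ,
      ρ0 + β * p * (ρ0 - ρ1) ≤ lam1 → lam1 < lam2 → lam2 ≤ ρ1 →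
      {π : ℝ | π ∈ Set.Icc (0:ℝ) 1 ∧
          π * ρ0 + (1 - π) * ρ1 + β * V 1 lam1 ≤ lam1 + β * V ((1 - p) * π) lam1} ⊆
      {π : ℝ | π ∈ Set.Icc (0:ℝ) 1 ∧
          π * ρ0 + (1 - π) * ρ1 + β * V 1 lam2 ≤ lam2 + β * V ((1 - p) * π) lam2} := by
  intro lam1 lam2 _ h12 _
  have hmaps : MapsTo (fun x => (1 - p) * x) (Icc 0 1) (Icc 0 1) := fun x ⟨hx0, hx1⟩ =>
    ⟨by nlinarith, by nlinarith⟩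
  have hbdd : Bornology.IsBounded ((fun x => V x lam2 - V x lam1) '' Icc 0 1) := by
    obtain ⟨C₁, hC₁⟩ := hVbd lam1
    obtain ⟨C₂, hC₂⟩ := hVbd lam2
    refine isBounded_iff_forall_norm_le.mpr ⟨C₂ + C₁, forall_mem_image.mpr fun x hx => ?_⟩
    exact (abs_sub _ _).trans (add_le_add (hC₂ x hx) (hC₁ x hx))
  have hkey := mul_le_add_mul_of_sandwich hbdd hmaps (right_mem_Icc.mpr zero_le_one)
    (sub_nonneg.mpr h12.le) hb0.le hb1 fun x hx => bellman_sub_sandwich hVeq hx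
  rintro π ⟨hπ, hstop⟩
  exact ⟨hπ, by linarith [hkey _ (hmaps hπ)]⟩

theorem stmt_16 (p ρ0 ρ1 β : ℝ)
    (hp0 : 0 < p) (hp1 : p < 1) (hr0 : 0 < ρ0) (hr01 : ρ0 < ρ1) (hr1 : ρ1 < 1)
    (hb0 : 0 < β) (hb1 : β < 1)
    (V : ℝ → ℝ → ℝ)
    (hVbd : ∀ lam : ℝ, ∃ C : ℝ, ∀ π ∈ Set.Icc (0:ℝ) 1, |V π lam| ≤ C)
    (hVeq : ∀ lam : ℝ, ∀ π ∈ Set.Icc (0:ℝ) 1,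
      V π lam = max (lam + β * V ((1 - p) * π) lam)
        (π * ρ0 + (1 - π) * ρ1 + β * V 1 lam)) :
    ∀ lam1 lam2 : ℝ,
      ρ0 + β * p * (ρ0 - ρ1) ≤ lam1 → lam1 < lam2 → lam2 ≤ ρ1 →
      {π : ℝ | π ∈ Set.Icc (0:ℝ) 1 ∧
          π * ρ0 + (1 - π) * ρ1 + β * V 1 lam1 ≤ lam1 + β * V ((1 - p) * π) lam1} ⊆
      {π : ℝ | π ∈ Set.Icc (0:ℝ) 1 ∧
          π * ρ0 + (1 - π) * ρ1 + β * V 1 lam2 ≤ lam2 + β * V ((1 - p) * π) lam2} :=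
  stmt_16_general p ρ0 ρ1 β hp0 hp1 hb0 hb1 V hVbd hVeq
end

section
/- For every π ∈ (0,1], the Whittle index W(π) := inf{λ ∈ ℝ : V1(π,λ) ≤ V0(π,λ)} of the type-B arm equals ρ1 + (1−β)·(ρ0 − ρ1)·π. -/
/-!
The value function is `V(π, λ) = max (W π) λ / (1 - β)` with `W π = ρ1 + (1 - β) (ρ0 - ρ1) π`:
playing now and forever after (the belief resets to `0`, where `W 0 = ρ1`) is worth
`W π / (1 - β)`, resting forever is worth `λ / (1 - β)`. It solves the Bellman equation because `W`
is antitone and the belief only grows while the arm rests, and it is the only bounded solution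
because the Bellman operator is a `β`-contraction in the sup norm. For this explicit `V`, resting is
optimal at `π` exactly when `W π ≤ λ`.
-/

open Set

theorem eqOn_of_abs_sub_le_mul_abs_sub {α : Type*} {S : Set α} {f g : α → ℝ} {β C : ℝ}
    (hβ0 : 0 ≤ β) (hβ1 : β < 1) (hC : ∀ x ∈ S, |f x - g x| ≤ C)
    (h : ∀ x ∈ S, ∃ y ∈ S, |f x - g x| ≤ β * |f y - g y|) : EqOn f g S := by
  intro x hx
  set D := (fun y => |f y - g y|) '' S
  have hbdd : BddAbove D := ⟨C, by rintro _ ⟨y, hy, rfl⟩; exact hC y hy⟩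
  have hle : ∀ y ∈ S, |f y - g y| ≤ sSup D := fun y hy => le_csSup hbdd ⟨y, hy, rfl⟩
  have hcontr : sSup D ≤ β * sSup D := by
    refine csSup_le ⟨_, x, hx, rfl⟩ ?_
    rintro _ ⟨y, hy, rfl⟩
    obtain ⟨z, hz, hyz⟩ := h y hy
    exact hyz.trans (mul_le_mul_of_nonneg_left (hle z hz) hβ0)
  have : |f x - g x| ≤ 0 := by nlinarith [hle x hx, abs_nonneg (f x - g x)]
  exact sub_eq_zero.mp (abs_nonpos_iff.mp this)

theorem eqOn_of_bellman {α : Type*} {S : Set α} {T : α → α} {x₀ : α} {r : α → ℝ}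
    {lam β : ℝ} {f g : α → ℝ} (hT : MapsTo T S S) (hx₀ : x₀ ∈ S) (hβ0 : 0 ≤ β) (hβ1 : β < 1)
    (hfC : ∃ C, ∀ x ∈ S, |f x| ≤ C) (hgC : ∃ C, ∀ x ∈ S, |g x| ≤ C)
    (hf : ∀ x ∈ S, f x = max (lam + β * f (T x)) (r x + β * f x₀))
    (hg : ∀ x ∈ S, g x = max (lam + β * g (T x)) (r x + β * g x₀)) :
    EqOn f g S := by
  obtain ⟨Cf, hCf⟩ := hfC
  obtain ⟨Cg, hCg⟩ := hgC
  refine eqOn_of_abs_sub_le_mul_abs_sub hβ0 hβ1 (C := Cf + Cg)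
    (fun x hx => (abs_sub _ _).trans (add_le_add (hCf x hx) (hCg x hx))) fun x hx => ?_
  have hmax := abs_max_sub_max_le_max (lam + β * f (T x)) (r x + β * f x₀)
    (lam + β * g (T x)) (r x + β * g x₀)
  rw [← hf x hx, ← hg x hx] at hmax
  have hscale : ∀ y, |β * f y - β * g y| = β * |f y - g y| := fun y => by
    rw [← mul_sub, abs_mul, abs_of_nonneg hβ0]
  simp only [add_sub_add_left_eq_sub, hscale] at hmax
  rcases le_max_iff.mp hmax with h | h
  exacts [⟨T x, hT hx, h⟩, ⟨x₀, hx₀, h⟩]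

namespace TypeB

variable (ρ0 ρ1 β : ℝ)

def whittleIndex (π : ℝ) : ℝ := ρ1 + (1 - β) * (ρ0 - ρ1) * π

noncomputable def value (lam π : ℝ) : ℝ := max (whittleIndex ρ0 ρ1 β π) lam / (1 - β)

variable {ρ0 ρ1 β} {lam π π' : ℝ}

theorem whittleIndex_zero : whittleIndex ρ0 ρ1 β 0 = ρ1 := by
  simp [whittleIndex]

theorem whittleIndex_antitone (hρ : ρ0 ≤ ρ1) (hβ1 : β ≤ 1) : Antitone (whittleIndex ρ0 ρ1 β) :=
  fun x y hxy => by
    unfold whittleIndex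
    nlinarith [mul_nonneg (sub_nonneg.2 hβ1) (sub_nonneg.2 hρ)]

theorem add_mul_value_eq (hβ1 : β < 1) (c : ℝ) :
    c + β * value ρ0 ρ1 β lam π =
      ((1 - β) * c + β * max (whittleIndex ρ0 ρ1 β π) lam) / (1 - β) := by
  have : 1 - β ≠ 0 := by linarith
  unfold value
  field_simp

/- The play and rest values of `value` at `π`, scaled by `1 - β` as in `add_mul_value_eq`; `π'` is
the belief after resting. -/
theorem whittleIndex_le_play (hβ0 : 0 ≤ β) :
    whittleIndex ρ0 ρ1 β π ≤
      (1 - β) * (π * ρ0 + (1 - π) * ρ1) + β * max (whittleIndex ρ0 ρ1 β 0) lam := by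
  rw [whittleIndex_zero]
  unfold whittleIndex
  nlinarith [mul_le_mul_of_nonneg_left (le_max_left ρ1 lam) hβ0]

theorem play_le_max (hπ : 0 ≤ π) (hρ : ρ0 ≤ ρ1) (hβ1 : β ≤ 1) :
    (1 - β) * (π * ρ0 + (1 - π) * ρ1) + β * max (whittleIndex ρ0 ρ1 β 0) lam ≤
      max (whittleIndex ρ0 ρ1 β π) lam := by
  rw [whittleIndex_zero]
  unfold whittleIndex
  rcases le_total lam ρ1 with h | h
  · rw [max_eq_left h]
    exact le_max_of_le_left (by linarith)
  · rw [max_eq_right h]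
    refine le_max_of_le_right ?_
    nlinarith [mul_nonneg (sub_nonneg.2 hβ1) (mul_nonneg hπ (sub_nonneg.2 hρ)),
      mul_nonneg (sub_nonneg.2 hβ1) (sub_nonneg.2 h)]

theorem le_rest (hβ0 : 0 ≤ β) : lam ≤ (1 - β) * lam + β * max (whittleIndex ρ0 ρ1 β π') lam := by
  nlinarith [mul_le_mul_of_nonneg_left (le_max_right (whittleIndex ρ0 ρ1 β π') lam) hβ0]

theorem rest_le_max (hππ' : π ≤ π') (hρ : ρ0 ≤ ρ1) (hβ0 : 0 ≤ β) (hβ1 : β ≤ 1) :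
    (1 - β) * lam + β * max (whittleIndex ρ0 ρ1 β π') lam ≤ max (whittleIndex ρ0 ρ1 β π) lam := by
  have hW := max_le_max_right lam (whittleIndex_antitone hρ hβ1 hππ')
  nlinarith [mul_le_mul_of_nonneg_left hW hβ0,
    mul_le_mul_of_nonneg_left (le_max_right (whittleIndex ρ0 ρ1 β π) lam) (sub_nonneg.2 hβ1)]

theorem rest_lt (hππ' : π ≤ π') (hρ : ρ0 ≤ ρ1) (hβ0 : 0 ≤ β) (hβ1 : β < 1)
    (hlt : lam < whittleIndex ρ0 ρ1 β π) :
    (1 - β) * lam + β * max (whittleIndex ρ0 ρ1 β π') lam < whittleIndex ρ0 ρ1 β π := by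
  have hW : max (whittleIndex ρ0 ρ1 β π') lam ≤ whittleIndex ρ0 ρ1 β π :=
    max_le (whittleIndex_antitone hρ hβ1.le hππ') hlt.le
  nlinarith [mul_le_mul_of_nonneg_left hW hβ0]

theorem value_bellman (hπ : 0 ≤ π) (hππ' : π ≤ π') (hρ : ρ0 ≤ ρ1) (hβ0 : 0 ≤ β) (hβ1 : β < 1) :
    value ρ0 ρ1 β lam π =
      max (lam + β * value ρ0 ρ1 β lam π') (π * ρ0 + (1 - π) * ρ1 + β * value ρ0 ρ1 β lam 0) := by
  rw [add_mul_value_eq hβ1, add_mul_value_eq hβ1, max_div_div_right (by linarith), value]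
  congr 1
  exact le_antisymm
    (max_le (le_max_of_le_right (whittleIndex_le_play hβ0)) (le_max_of_le_left (le_rest hβ0)))
    (max_le (rest_le_max hππ' hρ hβ0 hβ1.le) (play_le_max hπ hρ hβ1.le))

theorem play_le_rest_iff (hπ : 0 ≤ π) (hππ' : π ≤ π') (hρ : ρ0 ≤ ρ1) (hβ0 : 0 ≤ β)
    (hβ1 : β < 1) :
    π * ρ0 + (1 - π) * ρ1 + β * value ρ0 ρ1 β lam 0 ≤ lam + β * value ρ0 ρ1 β lam π' ↔
      whittleIndex ρ0 ρ1 β π ≤ lam := by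
  rw [add_mul_value_eq hβ1, add_mul_value_eq hβ1, div_le_div_iff_of_pos_right (by linarith)]
  constructor
  · intro h
    by_contra! hlt
    exact (rest_lt hππ' hρ hβ0 hβ1 hlt).not_ge ((whittleIndex_le_play hβ0).trans h)
  · intro h
    calc _ ≤ max (whittleIndex ρ0 ρ1 β π) lam := play_le_max hπ hρ hβ1.le
      _ = lam := max_eq_right h
      _ ≤ _ := le_rest hβ0

theorem value_bounded (lam : ℝ) : ∃ C, ∀ π ∈ Icc (0 : ℝ) 1, |value ρ0 ρ1 β lam π| ≤ C := by
  obtain ⟨C, hC⟩ := isCompact_Icc.exists_bound_of_continuousOn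
    (f := value ρ0 ρ1 β lam) (by unfold value whittleIndex; fun_prop)
  exact ⟨C, fun π hπ => by simpa only [Real.norm_eq_abs] using hC π hπ⟩

end TypeB

open TypeB

theorem stmt_18_general (p ρ0 ρ1 β : ℝ)
    (hp0 : 0 < p) (hp1 : p < 1) (hr01 : ρ0 < ρ1)
    (hb0 : 0 < β) (hb1 : β < 1)
    (V : ℝ → ℝ → ℝ)
    (hVbd : ∀ lam : ℝ, ∃ C : ℝ, ∀ π ∈ Set.Icc (0:ℝ) 1, |V π lam| ≤ C)
    (hVeq : ∀ lam : ℝ, ∀ π ∈ Set.Icc (0:ℝ) 1,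
      V π lam = max (lam + β * V (π + p * (1 - π)) lam)
        (π * ρ0 + (1 - π) * ρ1 + β * V 0 lam)) :
    ∀ π ∈ Set.Ioc (0:ℝ) 1,
      sInf {lam : ℝ |
          π * ρ0 + (1 - π) * ρ1 + β * V 0 lam ≤ lam + β * V (π + p * (1 - π)) lam} =
        ρ1 + (1 - β) * (ρ0 - ρ1) * π := by
  rintro π ⟨hπ0, hπ1⟩
  have hT : MapsTo (fun x => x + p * (1 - x)) (Icc 0 1) (Icc 0 1) := fun x ⟨hx0, hx1⟩ =>
    ⟨by nlinarith, by nlinarith⟩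
  have hρ : ρ0 ≤ ρ1 := hr01.le
  have hV : ∀ lam, ∀ x ∈ Icc (0 : ℝ) 1, V x lam = value ρ0 ρ1 β lam x := fun lam =>
    eqOn_of_bellman (f := (V · lam)) hT (left_mem_Icc.2 zero_le_one) hb0.le hb1 (hVbd lam)
      (value_bounded lam) (hVeq lam)
      fun x hx => value_bellman hx.1 (by nlinarith [hx.2]) hρ hb0.le hb1
  have hset : {lam : ℝ |
      π * ρ0 + (1 - π) * ρ1 + β * V 0 lam ≤ lam + β * V (π + p * (1 - π)) lam} =
      Ici (whittleIndex ρ0 ρ1 β π) := by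
    ext lam
    rw [mem_ofPred_eq, mem_Ici, hV lam 0 (left_mem_Icc.2 zero_le_one),
      hV lam _ (hT ⟨hπ0.le, hπ1⟩)]
    exact play_le_rest_iff hπ0.le (by nlinarith) hρ hb0.le hb1
  rw [hset, csInf_Ici, whittleIndex]

theorem stmt_18 (p ρ0 ρ1 β : ℝ)
    (hp0 : 0 < p) (hp1 : p < 1) (hr0 : 0 < ρ0) (hr01 : ρ0 < ρ1) (hr1 : ρ1 < 1)
    (hb0 : 0 < β) (hb1 : β < 1)
    (V : ℝ → ℝ → ℝ)
    (hVbd : ∀ lam : ℝ, ∃ C : ℝ, ∀ π ∈ Set.Icc (0:ℝ) 1, |V π lam| ≤ C)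
    (hVeq : ∀ lam : ℝ, ∀ π ∈ Set.Icc (0:ℝ) 1,
      V π lam = max (lam + β * V (π + p * (1 - π)) lam)
        (π * ρ0 + (1 - π) * ρ1 + β * V 0 lam)) :
    ∀ π ∈ Set.Ioc (0:ℝ) 1,
      sInf {lam : ℝ |
          π * ρ0 + (1 - π) * ρ1 + β * V 0 lam ≤ lam + β * V (π + p * (1 - π)) lam} =
        ρ1 + (1 - β) * (ρ0 - ρ1) * π :=
  stmt_18_general p ρ0 ρ1 β hp0 hp1 hr01 hb0 hb1 V hVbd hVeq
end
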